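/- For every n ≥ 1 and every w ∈ X_n, the following are equivalent: (a) cdes(w⁻¹) ≤ 2; (b) there exists k ∈ {1,…,n} such that the subsequence of positive entries of w_1⋯w_n, read left to right, is exactly (1, 2, …, k) and the subsequence of negative entries, read left to right, is exactly (−n, −n+1, …, −(k+1)); that is, w is a shuffle of the words 1 2 ⋯ k and (−n)(−n+1)⋯(−(k+1)). -/

import Mathlib

open scoped Classical

/-- A signed permutation of length `n`: a permutation `w` of `ℤ` with
`w(-i) = -w(i)` that fixes every integer of absolute value greater than `n`. -/
def IsSignedPerm (n : ℕ) (w : Equiv.Perm ℤ) : Prop :=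
  (∀ i : ℤ, w (-i) = - w i) ∧ ∀ i : ℤ, (n : ℤ) < |i| → w i = i

/-- Membership in `X_n := {w ∈ 𝔅_n : w⁻¹(1) > 0}`. -/
def InXn (n : ℕ) (w : Equiv.Perm ℤ) : Prop :=
  IsSignedPerm n w ∧ 0 < w.symm 1

/-- The type B descent number `des_B(w) = #{i ∈ {0,…,n-1} : w_i > w_{i+1}}`,
with the convention `w_0 = 0` (automatic, since a signed permutation fixes `0`). -/
noncomputable def desB (n : ℕ) (w : Equiv.Perm ℤ) : ℕ :=
  ((Finset.range n).filter fun i => w ((i : ℤ) + 1) < w (i : ℤ)).card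

/-- The flag-excedance `fexc(w) = 2·#{i : w_i > i} + #{i : w_i < 0}`. -/
noncomputable def fexc (n : ℕ) (w : Equiv.Perm ℤ) : ℕ :=
  2 * ((Finset.Icc (1 : ℤ) (n : ℤ)).filter fun i => i < w i).card
    + ((Finset.Icc (1 : ℤ) (n : ℤ)).filter fun i => w i < 0).card

/-- The cyclic successor on `{-n,…,-1,1,…,n}` (with `(-1)⁺ = 1` and `n⁺ = -n`). -/
def csucc (n : ℕ) (i : ℤ) : ℤ :=
  if i = -1 then 1 else if i = (n : ℤ) then -(n : ℤ) else i + 1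

/-- The circular descent set `CDes(w) = {i ∈ {-n,…,-1,1,…,n} : w(i) > w(i⁺)}`. -/
noncomputable def cdesSet (n : ℕ) (w : Equiv.Perm ℤ) : Finset ℤ :=
  (Finset.Icc (-(n : ℤ)) (n : ℤ)).filter fun i => i ≠ 0 ∧ w (csucc n i) < w i

/-- The circular descent number `cdes(w) = |CDes(w)|`. -/
noncomputable def cdes (n : ℕ) (w : Equiv.Perm ℤ) : ℕ := (cdesSet n w).card

/-- `a ≪ b`: there is a nonzero integer strictly between `a` and `b`. -/
def Lll (a b : ℤ) : Prop := ∃ c : ℤ, c ≠ 0 ∧ a < c ∧ c < b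

/-- The big ascent number `basc(w) = |BAsc(w)|`, where `BAsc(w) ⊆ {-1,1,…,n}`:
`-1 ∈ BAsc(w)` iff `w_1 ≥ 2`; for `1 ≤ i ≤ n-1`, `i ∈ BAsc(w)` iff `w_i ≪ w_{i+1}`;
and `n ∈ BAsc(w)` iff `w_n ≤ -2`. -/
noncomputable def basc (n : ℕ) (w : Equiv.Perm ℤ) : ℕ :=
  ((insert (-1 : ℤ) (Finset.Icc (1 : ℤ) (n : ℤ))).filter fun i =>
    if i = -1 then 2 ≤ w 1
    else if i = (n : ℤ) then w (n : ℤ) ≤ -2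
    else Lll (w i) (w (i + 1))).card

/-- `L'_{n,k}(r)`: the number of half-integer points in the `r`-th dilate of the
half-open type C hypersimplex `Δ'_{C_n,k}`, in the `y`-coordinates. -/
noncomputable def Lp (n k r : ℕ) : ℕ :=
  if k = 1 then
    Set.ncard {y : Fin n → ℤ |
      (∀ j, 0 ≤ y j ∧ y j ≤ 2 * (r : ℤ)) ∧ (∀ j : Fin n, (j : ℕ) = 0 → y j ≤ (r : ℤ)) ∧
      0 ≤ ∑ j, y j ∧ ∑ j, y j ≤ (r : ℤ)}
  else
    Set.ncard {y : Fin n → ℤ |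
      (∀ j, 0 ≤ y j ∧ y j ≤ 2 * (r : ℤ)) ∧ (∀ j : Fin n, (j : ℕ) = 0 → y j ≤ (r : ℤ)) ∧
      ((k : ℤ) - 1) * r < ∑ j, y j ∧ ∑ j, y j ≤ (k : ℤ) * r}

/-- `L_{n,k}(r)`: the number of half-integer points in the `r`-th dilate of the
closed type C hypersimplex `Δ_{C_n,k}`, in the `y`-coordinates. -/
noncomputable def Lc (n k r : ℕ) : ℕ :=
  Set.ncard {y : Fin n → ℤ |
    (∀ j, 0 ≤ y j ∧ y j ≤ 2 * (r : ℤ)) ∧ (∀ j : Fin n, (j : ℕ) = 0 → y j ≤ (r : ℤ)) ∧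
    ((k : ℤ) - 1) * r ≤ ∑ j, y j ∧ ∑ j, y j ≤ (k : ℤ) * r}

/-- `ψ_{n,k} = #{w ∈ X_n : basc(w) = k}`. -/
noncomputable def psiN (n k : ℕ) : ℕ :=
  {w : Equiv.Perm ℤ | InXn n w ∧ basc n w = k}.ncard

/-- `ψ_{n,k}` with an integer index (`0` for negative `k`). -/
noncomputable def psiZ (n : ℕ) (k : ℤ) : ℕ :=
  {w : Equiv.Perm ℤ | InXn n w ∧ (basc n w : ℤ) = k}.ncard

/-- `Ψ_{C_n}(t) = Σ_k ψ_{n,k} t^k ∈ ℤ[t]`. -/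
noncomputable def PsiC (n : ℕ) : Polynomial ℤ :=
  ∑ᶠ k : ℕ, (psiN n k : Polynomial ℤ) * Polynomial.X ^ k

/-- `Ψ_{C_n}(t)` with rational coefficients. -/
noncomputable def PsiCQ (n : ℕ) : Polynomial ℚ :=
  ∑ᶠ k : ℕ, (psiN n k : Polynomial ℚ) * Polynomial.X ^ k

/-- The descent number of a permutation of `{1,…,m}`. -/
noncomputable def desA (m : ℕ) (σ : Equiv.Perm (Fin m)) : ℕ :=
  (Finset.univ.filter fun i : Fin m =>
    ∃ h : (i : ℕ) + 1 < m, σ ⟨(i : ℕ) + 1, h⟩ < σ i).card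

/-- The classical (type A) Eulerian polynomial `E_m^A(t) = Σ_{σ ∈ S_m} t^{des σ}`. -/
noncomputable def EulerianA (m : ℕ) : Polynomial ℚ :=
  ∑ σ : Equiv.Perm (Fin m), Polynomial.X ^ desA m σ

/-- The relation `u ⇀ w` on `X_n`. -/
def covRel (n : ℕ) (u w : Equiv.Perm ℤ) : Prop :=
  InXn n u ∧ InXn n w ∧
    ((2 ≤ w 1 ∧ u = w * Equiv.swap (1 : ℤ) (-1)) ∨
     (∃ i : ℤ, 1 ≤ i ∧ i ≤ (n : ℤ) - 1 ∧ Lll (w i) (w (i + 1)) ∧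
        u = w * (Equiv.swap i (i + 1) * Equiv.swap (-i) (-(i + 1)))) ∨
     (w (n : ℤ) ≤ -2 ∧ u = w * Equiv.swap (n : ℤ) (-(n : ℤ))))

/-- The `i`-th coordinate (`1 ≤ i ≤ n`) of the vertex `v^j(w)` (`1 ≤ j ≤ n+1`):
`v^{n+1}_i(w) = #({1,…,i-1} ∩ CDes(w⁻¹))` and `v^j = v^{j+1} + ½ e_{w_j}`. -/
noncomputable def vcoord (n : ℕ) (w : Equiv.Perm ℤ) (j : ℕ) (i : ℕ) : ℚ :=
  ((Finset.Icc (1 : ℤ) ((i : ℤ) - 1) ∩ cdesSet n w.symm).card : ℚ)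
    + (1 / 2) * ∑ m ∈ Finset.Icc (j : ℤ) (n : ℤ),
        (if w m = (i : ℤ) then (1 : ℚ) else if w m = -(i : ℤ) then -1 else 0)

/-- `u` is the image `τ_n(w)`: in window notation `u = 1 w'_1 ⋯ w'_n`, where
`w'_i = w_i + 1` if `w_i > 0` and `w'_i = w_i - 1` if `w_i < 0`. -/
def isTau (n : ℕ) (w u : Equiv.Perm ℤ) : Prop :=
  u 1 = 1 ∧ ∀ i : ℤ, 1 ≤ i → i ≤ (n : ℤ) →
    u (i + 1) = if 0 < w i then w i + 1 else w i - 1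


/-!
Write `u = w⁻¹`, again a signed permutation, now with `u 1 > 0`. Since `u` is odd, every descent
`i` of the window `u 1 ⋯ u n` comes with the mirrored circular descent `-(i + 1)`, and the only
other possible circular descents are `n` (when `u n > 0`) and `-1` (when `u 1 < 0`), so
`cdes u = 2 · des (u 1 ⋯ u n) + [u n > 0] + [u 1 < 0]`. Hence `cdes u ≤ 2` exactly when the
window of `u` is an increasing run of positive values followed by an increasing run of negative
values, and read through `w = u⁻¹` this says that the positive entries of `w` are `1, …, k` and
the negative ones `-n, …, -(k + 1)`, each in increasing order from left to right.
-/

open Finset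

namespace IsSignedPerm

variable {n : ℕ} {w : Equiv.Perm ℤ}

lemma symm (hw : IsSignedPerm n w) : IsSignedPerm n w.symm :=
  ⟨fun i => by rw [Equiv.symm_apply_eq, hw.1, Equiv.apply_symm_apply],
    fun i hi => by rw [Equiv.symm_apply_eq, hw.2 i hi]⟩

lemma apply_mem_window (hw : IsSignedPerm n w) {i : ℤ} (hi₁ : 1 ≤ i) (hi₂ : i ≤ n) :
    -n ≤ w i ∧ w i ≤ n ∧ w i ≠ 0 := by
  have hne : w i ≠ 0 := fun h => by
    have := w.injective (h.trans (Function.Odd.map_zero hw.1).symm)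
    omega
  have hle : |w i| ≤ n := by
    by_contra! h
    have hfix : w i = i := w.injective (hw.2 (w i) h)
    rw [hfix, abs_of_pos (by omega)] at h
    omega
  exact ⟨(abs_le.1 hle).1, (abs_le.1 hle).2, hne⟩

end IsSignedPerm

noncomputable def windowDescents (n : ℕ) (u : ℤ → ℤ) : Finset ℤ :=
  (Icc 1 ((n : ℤ) - 1)).filter fun i => u (i + 1) < u i

section WindowDescents

variable {n : ℕ} {u : Equiv.Perm ℤ}

lemma mem_windowDescents {u : ℤ → ℤ} {i : ℤ} :
    i ∈ windowDescents n u ↔ 1 ≤ i ∧ i ≤ n - 1 ∧ u (i + 1) < u i := by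
  simp [windowDescents, and_assoc]

lemma cdesSet_eq (hn : 1 ≤ n) (hodd : Function.Odd u) :
    cdesSet n u = windowDescents n u ∪ (windowDescents n u).image (fun i => -(i + 1)) ∪
      ({(n : ℤ)} : Finset ℤ).filter (fun _ => 0 < u n) ∪
      ({-1} : Finset ℤ).filter (fun _ => u 1 < 0) := by
  ext i
  rw [cdesSet, mem_filter, mem_Icc]
  simp only [csucc, mem_union, mem_filter, mem_image, mem_singleton, mem_windowDescents]
  constructor
  · rintro ⟨⟨hlo, hhi⟩, hi0, hdesc⟩
    split_ifs at hdesc with h₁ h₂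
    · rw [h₁, hodd] at hdesc
      exact Or.inr ⟨h₁, by omega⟩
    · rw [h₂, hodd] at hdesc
      exact Or.inl (Or.inr ⟨h₂, by omega⟩)
    · rcases lt_or_gt_of_ne hi0 with hneg | hpos
      · refine Or.inl (Or.inl (Or.inr ⟨-(i + 1), ⟨by omega, by omega, ?_⟩, by ring⟩))
        rw [show -(i + 1) + 1 = -i by ring, hodd, hodd]
        omega
      · exact Or.inl (Or.inl (Or.inl ⟨by omega, by omega, hdesc⟩))
  · rintro (((⟨hj₁, hj₂, hdesc⟩ | ⟨j, ⟨hj₁, hj₂, hdesc⟩, rfl⟩) | ⟨rfl, h⟩) | ⟨rfl, h⟩)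
    · refine ⟨⟨by omega, by omega⟩, by omega, ?_⟩
      rwa [if_neg (by omega), if_neg (by omega)]
    · refine ⟨⟨by omega, by omega⟩, by omega, ?_⟩
      rw [if_neg (by omega), if_neg (by omega), show -(j + 1) + 1 = -j by ring, hodd, hodd]
      omega
    · refine ⟨⟨by omega, le_rfl⟩, by omega, ?_⟩
      rw [if_neg (by omega), if_pos rfl, hodd]
      omega
    · refine ⟨⟨by omega, by omega⟩, by omega, ?_⟩
      rw [if_pos rfl, hodd]
      omega

lemma cdes_eq (hn : 1 ≤ n) (hodd : Function.Odd u) :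
    cdes n u = 2 * #(windowDescents n u) + (if 0 < u n then 1 else 0) +
      (if u 1 < 0 then 1 else 0) := by
  have hinj : Function.Injective fun i : ℤ => -(i + 1) := fun a b h => by simpa using h
  rw [cdes, cdesSet_eq hn hodd, card_union_of_disjoint, card_union_of_disjoint,
    card_union_of_disjoint, card_image_of_injective _ hinj, filter_singleton, filter_singleton]
  · split_ifs <;> simp only [card_singleton, card_empty] <;> omega
  all_goals
    simp only [disjoint_left, mem_union, mem_image, mem_filter, mem_singleton,
      mem_windowDescents]
    omega

end WindowDescents

def IsPosNegRuns (n : ℕ) (u : ℤ → ℤ) (k : ℤ) : Prop :=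
  StrictMonoOn u (Set.Icc 1 k) ∧ StrictMonoOn u (Set.Icc (k + 1) n) ∧
    (∀ i ∈ Set.Icc 1 k, 0 < u i) ∧ ∀ i ∈ Set.Icc (k + 1) n, u i < 0

section PosNegRuns

variable {n : ℕ} {u : Equiv.Perm ℤ} {k : ℤ}

lemma IsPosNegRuns.windowDescents_subset (h : IsPosNegRuns n u k) :
    windowDescents n u ⊆ {k} := by
  intro i hi
  obtain ⟨hi₁, hin, hdesc⟩ := mem_windowDescents.1 hi
  rw [mem_singleton]
  by_contra hik
  rcases lt_or_gt_of_ne hik with hlt | hgt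
  · have := h.1 ⟨hi₁, hlt.le⟩ ⟨by omega, by omega⟩ (lt_add_one i)
    omega
  · have := h.2.1 ⟨by omega, by omega⟩ ⟨by omega, by omega⟩ (lt_add_one i)
    omega

lemma isPosNegRuns_of_windowDescents_subset (hk₁ : 1 ≤ k) (hkn : k ≤ n) (h₁ : 0 < u 1)
    (hD : windowDescents n u ⊆ {k}) (hlast : k < n → u n < 0) : IsPosNegRuns n u k := by
  have hasc : ∀ i : ℤ, 1 ≤ i → i < n → i ≠ k → u i < u (i + 1) := by
    intro i hi₁ hin hik
    have hnot : i ∉ windowDescents n u := fun h => hik (mem_singleton.1 (hD h))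
    have hne : u (i + 1) ≠ u i := fun h => by
      have := u.injective h
      omega
    rw [mem_windowDescents] at hnot
    omega
  have mono₁ : StrictMonoOn u (Set.Icc 1 k) :=
    strictMonoOn_of_lt_add_one Set.ordConnected_Icc fun a _ ha ha' =>
      hasc a ha.1 (by linarith [ha'.2]) (by linarith [ha'.2])
  have mono₂ : StrictMonoOn u (Set.Icc (k + 1) n) :=
    strictMonoOn_of_lt_add_one Set.ordConnected_Icc fun a _ ha ha' =>
      hasc a (by linarith [ha.1]) (by linarith [ha'.2]) (by linarith [ha.1])
  refine ⟨mono₁, mono₂, fun i hi => ?_, fun i hi => ?_⟩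
  · exact h₁.trans_le (mono₁.monotoneOn ⟨le_rfl, hk₁⟩ hi hi.1)
  · exact (mono₂.monotoneOn hi ⟨hi.1.trans hi.2, le_rfl⟩ hi.2).trans_lt
      (hlast (by linarith [hi.1, hi.2]))

lemma exists_windowDescents_subset_of_cdes_le_two (hn : 1 ≤ n) (hodd : Function.Odd u)
    (h₁ : 0 < u 1) (h : cdes n u ≤ 2) :
    ∃ k : ℤ, 1 ≤ k ∧ k ≤ n ∧ windowDescents n u ⊆ {k} ∧ (k < n → u n < 0) := by
  rw [cdes_eq hn hodd, if_neg h₁.not_gt] at h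
  obtain hempty | ⟨d, hd⟩ := (windowDescents n u).eq_empty_or_nonempty
  · exact ⟨n, by omega, le_rfl, by simp [hempty], by omega⟩
  have hcard : #(windowDescents n u) = 1 := by
    have := card_pos.2 ⟨d, hd⟩
    omega
  have hun : u n ≠ 0 := fun h0 => by
    have := u.injective (h0.trans hodd.map_zero.symm)
    omega
  obtain ⟨hd₁, hdn, -⟩ := mem_windowDescents.1 hd
  refine ⟨d, hd₁, by omega, fun i hi => mem_singleton.2 (card_le_one.1 hcard.le i hi d hd), ?_⟩
  intro
  split_ifs at h with hpos <;> omega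

theorem cdes_le_two_iff_exists_isPosNegRuns (hn : 1 ≤ n) (hodd : Function.Odd u)
    (h₁ : 0 < u 1) : cdes n u ≤ 2 ↔ ∃ k : ℤ, 1 ≤ k ∧ k ≤ n ∧ IsPosNegRuns n u k := by
  constructor
  · intro h
    obtain ⟨k, hk₁, hkn, hD, hlast⟩ := exists_windowDescents_subset_of_cdes_le_two hn hodd h₁ h
    exact ⟨k, hk₁, hkn, isPosNegRuns_of_windowDescents_subset hk₁ hkn h₁ hD hlast⟩
  · rintro ⟨k, hk₁, hkn, hruns⟩
    have hD := card_le_card hruns.windowDescents_subset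
    rw [cdes_eq hn hodd, if_neg h₁.not_gt]
    rcases hkn.lt_or_eq with hlt | rfl
    · rw [if_neg (hruns.2.2.2 n ⟨by omega, le_rfl⟩).not_gt]
      simp only [card_singleton] at hD
      omega
    · have hempty : windowDescents n u = ∅ := eq_empty_of_forall_notMem fun i hi => by
        have := mem_singleton.1 (hruns.windowDescents_subset hi)
        have := (mem_windowDescents.1 hi).2.1
        omega
      rw [hempty, card_empty]
      split_ifs <;> omega

end PosNegRuns

def IsShuffle (n : ℕ) (w : ℤ → ℤ) (k : ℤ) : Prop :=
  (∀ i j : ℤ, 1 ≤ i → i < j → j ≤ (n : ℤ) → 0 < w i → 0 < w j → w i < w j) ∧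
  (∀ i j : ℤ, 1 ≤ i → i < j → j ≤ (n : ℤ) → w i < 0 → w j < 0 → w i < w j) ∧
  (∀ i : ℤ, 1 ≤ i → i ≤ (n : ℤ) → 0 < w i → w i ≤ k) ∧
  (∀ i : ℤ, 1 ≤ i → i ≤ (n : ℤ) → w i < 0 → w i ≤ -(k + 1))

namespace IsSignedPerm

variable {n : ℕ} {w : Equiv.Perm ℤ} {k : ℤ}

lemma isPosNegRuns_symm_of_isShuffle (hw : IsSignedPerm n w) (hk : 0 ≤ k) (hkn : k ≤ n)
    (hs : IsShuffle n w k) : IsPosNegRuns n w.symm k := by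
  obtain ⟨hincPos, hincNeg, hlePos, hleNeg⟩ := hs
  have hneg_symm (j : ℤ) : w (-w.symm j) = -j := by rw [hw.1, Equiv.apply_symm_apply]
  have hpos : ∀ j ∈ Set.Icc 1 k, 0 < w.symm j := by
    rintro j ⟨hj₁, hjk⟩
    obtain ⟨hlo, -, hne⟩ := hw.symm.apply_mem_window hj₁ (hjk.trans hkn)
    by_contra! hle
    have := hleNeg (-w.symm j) (by omega) (by omega) (by rw [hneg_symm]; omega)
    rw [hneg_symm] at this
    omega
  have hneg : ∀ j ∈ Set.Icc (k + 1) n, w.symm j < 0 := by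
    rintro j ⟨hkj, hjn⟩
    obtain ⟨-, hhi, hne⟩ := hw.symm.apply_mem_window (by omega) hjn
    by_contra! hle
    have := hlePos (w.symm j) (by omega) hhi (by rw [Equiv.apply_symm_apply]; omega)
    rw [Equiv.apply_symm_apply] at this
    omega
  refine ⟨fun j hj j' hj' hjj' => ?_, fun j hj j' hj' hjj' => ?_, hpos, hneg⟩
  · have hne : w.symm j ≠ w.symm j' := w.symm.injective.ne hjj'.ne
    have hhi := (hw.symm.apply_mem_window hj.1 (hj.2.trans hkn)).2.1
    by_contra! hle
    have := hincPos (w.symm j') (w.symm j) (hpos j' hj') (lt_of_le_of_ne hle hne.symm) hhi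
      (by rw [Equiv.apply_symm_apply]; linarith [hj'.1])
      (by rw [Equiv.apply_symm_apply]; linarith [hj.1])
    simp only [Equiv.apply_symm_apply] at this
    omega
  · have hne : w.symm j ≠ w.symm j' := w.symm.injective.ne hjj'.ne
    have hlo := (hw.symm.apply_mem_window (by linarith [hj'.1]) hj'.2).1
    have hj₀ := hneg j hj
    have hj₀' := hneg j' hj'
    by_contra! hle
    have := hincNeg (-w.symm j) (-w.symm j') (by omega) (by omega) (by omega)
      (by rw [hneg_symm]; linarith [hj.1]) (by rw [hneg_symm]; linarith [hj'.1])
    rw [hneg_symm, hneg_symm] at this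
    omega

lemma isShuffle_of_isPosNegRuns_symm (hw : IsSignedPerm n w) (h : IsPosNegRuns n w.symm k) :
    IsShuffle n w k := by
  obtain ⟨monoPos, monoNeg, hpos, hneg⟩ := h
  have hsymm_neg (i : ℤ) : w.symm (-w i) = -i := by rw [hw.symm.1, Equiv.symm_apply_apply]
  have hlePos : ∀ i : ℤ, 1 ≤ i → i ≤ n → 0 < w i → w i ≤ k := by
    intro i hi₁ hin hwi
    by_contra! hk
    have := hneg (w i) ⟨by omega, (hw.apply_mem_window hi₁ hin).2.1⟩
    rw [Equiv.symm_apply_apply] at this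
    omega
  have hleNeg : ∀ i : ℤ, 1 ≤ i → i ≤ n → w i < 0 → w i ≤ -(k + 1) := by
    intro i hi₁ hin hwi
    by_contra! hk
    have := hpos (-w i) ⟨by omega, by omega⟩
    rw [hsymm_neg] at this
    omega
  refine ⟨fun i j hi hij hj hwi hwj => ?_, fun i j hi hij hj hwi hwj => ?_, hlePos, hleNeg⟩
  · have := monoPos.lt_iff_lt (a := w i) (b := w j) ⟨hwi, hlePos i hi (by omega) hwi⟩
      ⟨hwj, hlePos j (by omega) hj hwj⟩
    simp only [Equiv.symm_apply_apply] at this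
    exact this.1 hij
  · have hi' := hleNeg i hi (by omega) hwi
    have hj' := hleNeg j (by omega) hj hwj
    have hilo := (hw.apply_mem_window hi (by omega)).1
    have hjlo := (hw.apply_mem_window (by omega) hj).1
    have := (monoNeg.lt_iff_lt (a := -w j) (b := -w i) ⟨by omega, by omega⟩
      ⟨by omega, by omega⟩).1
    rw [hsymm_neg, hsymm_neg] at this
    linarith [this (by omega)]

theorem isPosNegRuns_symm_iff_isShuffle (hw : IsSignedPerm n w) (hk : 0 ≤ k) (hkn : k ≤ n) :
    IsPosNegRuns n w.symm k ↔ IsShuffle n w k :=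
  ⟨hw.isShuffle_of_isPosNegRuns_symm, hw.isPosNegRuns_symm_of_isShuffle hk hkn⟩

end IsSignedPerm

/-- For `w ∈ X_n`: `cdes(w⁻¹) ≤ 2` if and only if the window of `w`
is a shuffle of the words `1 2 ⋯ k` and `(-n)(-n+1)⋯(-(k+1))` for some `1 ≤ k ≤ n`,
i.e. the positive entries, read left to right, are exactly `1, 2, …, k` and the
negative entries, read left to right, are exactly `-n, -n+1, …, -(k+1)`. -/
theorem cdes_le_two_iff_shuffle (n : ℕ) (hn : 1 ≤ n) (w : Equiv.Perm ℤ) (hw : InXn n w) :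
    cdes n w.symm ≤ 2 ↔
      ∃ k : ℤ, 1 ≤ k ∧ k ≤ (n : ℤ) ∧
        (∀ i j : ℤ, 1 ≤ i → i < j → j ≤ (n : ℤ) → 0 < w i → 0 < w j → w i < w j) ∧
        (∀ i j : ℤ, 1 ≤ i → i < j → j ≤ (n : ℤ) → w i < 0 → w j < 0 → w i < w j) ∧
        (∀ i : ℤ, 1 ≤ i → i ≤ (n : ℤ) → 0 < w i → w i ≤ k) ∧
        (∀ i : ℤ, 1 ≤ i → i ≤ (n : ℤ) → w i < 0 → w i ≤ -(k + 1)) := by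
  obtain ⟨hsigned, hpos⟩ := hw
  rw [cdes_le_two_iff_exists_isPosNegRuns hn hsigned.symm.1 hpos]
  refine exists_congr fun k => and_congr_right fun hk => and_congr_right fun hkn => ?_
  exact hsigned.isPosNegRuns_symm_iff_isShuffle (by omega) hkn
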